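/- arXiv:2007.11241 — 4 statements merged into one kernel-verified Lean document; each statement's English description precedes it below -/
import Mathlib

section
/- For the parameterized de-mixing matrix W = [[β*, hᴴ], [g, −γ I_{d−1}]] with β*γ = 1 − hᴴg and γ ≠ 0, the squared modulus of the determinant satisfies |det W|² = |γ|^{2(d−2)}. -/
open Matrix

theorem det_fromBlocks_smul_one₂₂ {K : Type*} [Field K] {m n : Type*} [Fintype m] [Fintype n]
    [DecidableEq m] [DecidableEq n]
    (A : Matrix m m K) (B : Matrix m n K) (C : Matrix n m K) {c : K} (hc : c ≠ 0) :
    (fromBlocks A B C (c • 1)).det = c ^ Fintype.card n * (A - c⁻¹ • (B * C)).det := by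
  have hfactor :
      fromBlocks A B C (c • 1) = fromBlocks A (c⁻¹ • B) C 1 * fromBlocks 1 0 0 (c • 1) := by
    simp [fromBlocks_multiply, smul_smul, mul_inv_cancel₀ hc]
  rw [hfactor, det_mul, det_fromBlocks_one₂₂, det_fromBlocks_zero₂₁, det_smul, Matrix.smul_mul,
    det_one, det_one, one_mul, mul_one, mul_comm]

/-- For the parameterized de-mixing matrix `W = [[β*, hᴴ], [g, -γ I]]` with
`β* γ = 1 - hᴴ g` and `γ ≠ 0`, one has `|det W|² = |γ|^{2(d-2)}`, where `d = n+1`. -/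
theorem abs_det_demixing (n : ℕ) (hn : 1 ≤ n) (γ β : ℂ) (hγ : γ ≠ 0)
    (g h : Fin n → ℂ)
    (hβ : star β * γ = 1 - ∑ j, star (h j) * g j)
    (W : Matrix (Fin 1 ⊕ Fin n) (Fin 1 ⊕ Fin n) ℂ)
    (hW : W = Matrix.fromBlocks (Matrix.of fun _ _ => star β)
        (Matrix.of fun _ j => star (h j)) (Matrix.of fun i _ => g i)
        (-γ • (1 : Matrix (Fin n) (Fin n) ℂ))) :
    ‖W.det‖ ^ 2 = ‖γ‖ ^ (2 * (n - 1)) := by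
  have hschur : star β - (-γ)⁻¹ * ∑ j, star (h j) * g j = γ⁻¹ := by
    field_simp
    linear_combination hβ
  have hdet : W.det = (-1) ^ n * γ ^ (n - 1) := by
    rw [hW, det_fromBlocks_smul_one₂₂ _ _ _ (neg_ne_zero.2 hγ), Fintype.card_fin, det_fin_one]
    simp only [Matrix.sub_apply, Matrix.smul_apply, mul_apply, of_apply, smul_eq_mul, hschur]
    obtain ⟨k, rfl⟩ := Nat.exists_eq_add_of_le' hn
    rw [neg_pow, pow_succ' γ, Nat.add_sub_cancel]
    field_simp
  rw [hdet, norm_mul, norm_pow, norm_neg, norm_one, one_pow, one_mul, norm_pow, ← pow_mul, mul_comm]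
end

section
/- Let C be a d×d Hermitian positive definite matrix, w ∈ ℂ^d with σ² = wᴴ C w > 0, a = C w/σ², and let f ∈ ℂ^d satisfy wᴴ f = 1. Set ∇ = a − f. Then for all λ ≠ 1, (C/σ² − λ a aᴴ)⁻¹ ∇ = σ² C⁻¹ ∇; in particular the limit as λ → 1 of (C/σ² − λ a aᴴ)⁻¹ ∇ equals σ² C⁻¹ ∇. -/
open Matrix
open scoped ComplexOrder

/-!
Write `B = C/σ²`, so that `a = B w` and `B⁻¹ = σ² C⁻¹`. Since `B` is Hermitian,
`aᴴ B⁻¹ x = wᴴ x` for every `x`; hence `aᴴ B⁻¹ (λ a) = λ` and `aᴴ B⁻¹ ∇ = wᴴ a − wᴴ f = 0`.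
The Woodbury identity `(B − u vᴴ)⁻¹ = B⁻¹ − B⁻¹ u (vᴴ B⁻¹ u − 1)⁻¹ vᴴ B⁻¹` with `u = λ a`,
`v = a` applies exactly when `λ ≠ 1`, and its correction term vanishes on `∇`. So
`(B − λ a aᴴ)⁻¹ ∇ = B⁻¹ ∇` on a punctured neighbourhood of `1`, which also gives the limit.
-/

namespace Matrix

variable {n α : Type*} [Fintype n] [DecidableEq n] [CommRing α]

theorem inv_sub_vecMulVec_mulVec_of_dotProduct_eq_zero {A : Matrix n n α} (hA : IsUnit A)
    {u v g : n → α} (huv : IsUnit (1 - v ⬝ᵥ A⁻¹ *ᵥ u)) (hg : v ⬝ᵥ A⁻¹ *ᵥ g = 0) :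
    (A - vecMulVec u v)⁻¹ *ᵥ g = A⁻¹ *ᵥ g := by
  set U := replicateCol Unit u
  set V := replicateRow Unit v
  have hsplit : A - vecMulVec u v = A + U * (-1 : Matrix Unit Unit α) * V := by
    rw [vecMulVec_eq Unit, Matrix.mul_neg, Matrix.mul_one, Matrix.neg_mul, sub_eq_add_neg]
  have hneg : (-1 : Matrix Unit Unit α)⁻¹ = -1 := inv_eq_left_inv (by simp)
  have hunit : IsUnit ((-1 : Matrix Unit Unit α)⁻¹ + V * A⁻¹ * U) := by
    rw [isUnit_iff_isUnit_det, det_unique, hneg, Matrix.mul_assoc, ← replicateCol_mulVec]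
    simpa [U, V, neg_add_eq_sub] using huv.neg
  have hVg : V *ᵥ A⁻¹ *ᵥ g = 0 := by
    rw [replicateRow_mulVec_eq_const, hg]
    rfl
  rw [hsplit, add_mul_mul_inv_eq_sub _ _ _ _ hA (isUnit_one (M := Matrix Unit Unit α)).neg hunit,
    sub_mulVec, ← mulVec_mulVec g _ A⁻¹, ← mulVec_mulVec _ _ V, hVg, mulVec_zero, sub_zero]

theorem IsHermitian.star_mulVec_dotProduct_inv_mulVec [StarRing α] {B : Matrix n n α}
    (hB : B.IsHermitian) (hB_unit : IsUnit B) (w x : n → α) :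
    star (B *ᵥ w) ⬝ᵥ B⁻¹ *ᵥ x = star w ⬝ᵥ x := by
  rw [star_mulVec, hB.eq, ← dotProduct_mulVec, mulVec_mulVec,
    mul_nonsing_inv _ ((isUnit_iff_isUnit_det B).mp hB_unit), one_mulVec]

end Matrix

/-- Proposition 2 of the paper: with `∇ = a − f` where `wᴴ f = 1`,
for all `λ ≠ 1` we have `(C/σ² − λ a aᴴ)⁻¹ ∇ = σ² C⁻¹ ∇`; in particular the
limit as `λ → 1` of `(C/σ² − λ a aᴴ)⁻¹ ∇` equals `σ² C⁻¹ ∇`. -/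
theorem prop2_limit (d : ℕ) (C : Matrix (Fin d) (Fin d) ℂ)
    (hC : C.PosDef) (w : Fin d → ℂ) (hw : w ≠ 0)
    (σ2 : ℂ) (hσ : σ2 = star w ⬝ᵥ C.mulVec w)
    (a : Fin d → ℂ) (ha : a = σ2⁻¹ • C.mulVec w)
    (f : Fin d → ℂ) (hf : star w ⬝ᵥ f = 1)
    (grad : Fin d → ℂ) (hgrad : grad = a - f) :
    (∀ l : ℂ, l ≠ 1 →
      (σ2⁻¹ • C - l • Matrix.vecMulVec a (star a))⁻¹.mulVec grad =
        σ2 • C⁻¹.mulVec grad) ∧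
    Filter.Tendsto
      (fun l : ℂ => (σ2⁻¹ • C - l • Matrix.vecMulVec a (star a))⁻¹.mulVec grad)
      (nhdsWithin 1 {(1 : ℂ)}ᶜ)
      (nhds (σ2 • C⁻¹.mulVec grad)) := by
  have hσ_pos : 0 < σ2 := hσ ▸ hC.dotProduct_mulVec_pos hw
  have hB : (σ2⁻¹ • C).PosDef := hC.smul (inv_pos.mpr hσ_pos)
  have hB_inv : (σ2⁻¹ • C)⁻¹ = σ2 • C⁻¹ := inv_eq_left_inv (by
    rw [smul_mul_smul_comm, mul_inv_cancel₀ hσ_pos.ne', one_smul,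
      nonsing_inv_mul _ ((isUnit_iff_isUnit_det C).mp hC.isUnit)])
  have hdot (x : Fin d → ℂ) : star a ⬝ᵥ (σ2⁻¹ • C)⁻¹ *ᵥ x = star w ⬝ᵥ x := by
    rw [ha, ← smul_mulVec]
    exact hB.isHermitian.star_mulVec_dotProduct_inv_mulVec hB.isUnit w x
  have hwa : star w ⬝ᵥ a = 1 := by
    rw [ha, dotProduct_smul, ← hσ, smul_eq_mul, inv_mul_cancel₀ hσ_pos.ne']
  have hfixed (l : ℂ) (hl : l ≠ 1) :
      (σ2⁻¹ • C - l • vecMulVec a (star a))⁻¹ *ᵥ grad = σ2 • C⁻¹ *ᵥ grad := by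
    rw [← smul_vecMulVec, inv_sub_vecMulVec_mulVec_of_dotProduct_eq_zero hB.isUnit, hB_inv,
      smul_mulVec]
    · rw [hdot, dotProduct_smul, hwa, smul_eq_mul, mul_one]
      exact (sub_ne_zero.mpr hl.symm).isUnit
    · rw [hdot, hgrad, dotProduct_sub, hwa, hf, sub_self]
  exact ⟨hfixed, tendsto_const_nhds.congr'
    (eventually_nhdsWithin_of_forall fun l hl => (hfixed l hl).symm)⟩
end

section
/- Let C be a d×d Hermitian positive definite matrix, w ∈ ℂ^d with σ² = wᴴ C w > 0, and a = C w/σ². Then the matrix C/σ² − a aᴴ is positive semidefinite with rank exactly d − 1, and its kernel is the span of a. -/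
open Matrix
open scoped ComplexOrder

/-! With `σ = wᴴ C w` and `C` Hermitian, `(C/σ − a aᴴ) v = C (v − (wᴴ C v / σ) w) / σ`: the matrix is
`C/σ` after the `C`-orthogonal projection away from `w`. So its quadratic form at `v` is the
`C`-norm of that projection divided by `σ > 0`, and, `C` being injective, its kernel is the line
through `w`; rank–nullity then gives the rank. -/

namespace Matrix

variable {n : Type*} [Fintype n]

lemma rank_eq_card_sub_one_of_mulVec_eq_zero_iff {K m : Type*} [Field K] [Fintype m]
    {M : Matrix m n K} {w : n → K} (hw : w ≠ 0)
    (hker : ∀ v, M *ᵥ v = 0 ↔ ∃ c : K, v = c • w) : M.rank = Fintype.card n - 1 := by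
  have hspan : LinearMap.ker M.mulVecLin = K ∙ w := by
    ext v
    simp [hker, Submodule.mem_span_singleton, eq_comm]
  have hrank_nullity := LinearMap.finrank_range_add_finrank_ker M.mulVecLin
  rw [hspan, finrank_span_singleton hw, Module.finrank_fintype_fun_eq_card] at hrank_nullity
  rw [rank]
  omega

section CommSemiring

variable {R : Type*} [CommSemiring R] [StarRing R] {C : Matrix n n R}

lemma IsHermitian.star_mulVec_dotProduct (hC : C.IsHermitian) (w v : n → R) :
    star (C *ᵥ w) ⬝ᵥ v = star w ⬝ᵥ C *ᵥ v := by
  rw [star_mulVec, hC.eq, dotProduct_mulVec]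

lemma IsHermitian.isSelfAdjoint_star_dotProduct_mulVec_self (hC : C.IsHermitian) (w : n → R) :
    IsSelfAdjoint (star w ⬝ᵥ C *ᵥ w) := by
  rw [IsSelfAdjoint, ← star_dotProduct, hC.star_mulVec_dotProduct]

end CommSemiring

section Field

variable {K : Type*} [Field K] [StarRing K] {C : Matrix n n K} {w a : n → K} {σ : K}

lemma star_dotProduct_mulVec_sub_smul_eq_zero (hσ : σ = star w ⬝ᵥ C *ᵥ w) (hσ0 : σ ≠ 0)
    (v : n → K) : star w ⬝ᵥ C *ᵥ (v - (σ⁻¹ * (star w ⬝ᵥ C *ᵥ v)) • w) = 0 := by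
  rw [mulVec_sub, mulVec_smul, dotProduct_sub, dotProduct_smul, smul_eq_mul, ← hσ, mul_comm,
    mul_inv_cancel_left₀ hσ0, sub_self]

lemma IsHermitian.sub_vecMulVec_mulVec (hC : C.IsHermitian) (hσ : σ = star w ⬝ᵥ C *ᵥ w)
    (ha : a = σ⁻¹ • C *ᵥ w) (v : n → K) :
    (σ⁻¹ • C - vecMulVec a (star a)) *ᵥ v = σ⁻¹ • C *ᵥ (v - (σ⁻¹ * (star w ⬝ᵥ C *ᵥ v)) • w) := by
  have hσ' : star σ = σ := hσ ▸ hC.isSelfAdjoint_star_dotProduct_mulVec_self w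
  have hav : star a ⬝ᵥ v = σ⁻¹ * (star w ⬝ᵥ C *ᵥ v) := by
    rw [ha, star_smul, smul_dotProduct, star_inv₀, hσ', hC.star_mulVec_dotProduct, smul_eq_mul]
  rw [sub_mulVec, smul_mulVec, vecMulVec_mulVec, op_smul_eq_smul, hav, mulVec_sub, mulVec_smul,
    smul_sub, ha]
  exact congrArg _ (smul_comm _ _ _)

lemma IsHermitian.star_dotProduct_sub_vecMulVec_mulVec (hC : C.IsHermitian)
    (hσ : σ = star w ⬝ᵥ C *ᵥ w) (hσ0 : σ ≠ 0) (ha : a = σ⁻¹ • C *ᵥ w) (v : n → K) :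
    let u := v - (σ⁻¹ * (star w ⬝ᵥ C *ᵥ v)) • w
    star v ⬝ᵥ (σ⁻¹ • C - vecMulVec a (star a)) *ᵥ v = σ⁻¹ * (star u ⬝ᵥ C *ᵥ u) := by
  intro u
  have hwu : star w ⬝ᵥ C *ᵥ u = 0 := star_dotProduct_mulVec_sub_smul_eq_zero hσ hσ0 v
  calc star v ⬝ᵥ (σ⁻¹ • C - vecMulVec a (star a)) *ᵥ v
      = σ⁻¹ * (star (u + (σ⁻¹ * (star w ⬝ᵥ C *ᵥ v)) • w) ⬝ᵥ C *ᵥ u) := by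
        rw [hC.sub_vecMulVec_mulVec hσ ha, dotProduct_smul, smul_eq_mul, sub_add_cancel]
    _ = σ⁻¹ * (star u ⬝ᵥ C *ᵥ u) := by
        rw [star_add, star_smul, add_dotProduct, smul_dotProduct, hwu, smul_zero, add_zero]

end Field

variable {𝕜 : Type*} [RCLike 𝕜] {C : Matrix n n 𝕜} {w a : n → 𝕜} {σ : 𝕜}

lemma PosDef.posSemidef_sub_vecMulVec (hC : C.PosDef) (hw : w ≠ 0) (hσ : σ = star w ⬝ᵥ C *ᵥ w)
    (ha : a = σ⁻¹ • C *ᵥ w) : (σ⁻¹ • C - vecMulVec a (star a)).PosSemidef := by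
  have hσpos : 0 < σ := hσ ▸ hC.dotProduct_mulVec_pos hw
  have hσinv : 0 < σ⁻¹ := RCLike.inv_pos_of_pos hσpos
  refine .of_dotProduct_mulVec_nonneg
    ((hC.isHermitian.smul (IsSelfAdjoint.of_nonneg hσinv.le)).sub
      (posSemidef_vecMulVec_self_star a).isHermitian) fun v => ?_
  rw [hC.isHermitian.star_dotProduct_sub_vecMulVec_mulVec hσ hσpos.ne' ha v]
  exact mul_nonneg hσinv.le (hC.posSemidef.dotProduct_mulVec_nonneg _)

lemma PosDef.mulVec_eq_zero_iff (hC : C.PosDef) {v : n → 𝕜} : C *ᵥ v = 0 ↔ v = 0 := by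
  refine ⟨fun h => by_contra fun hv => ?_, fun h => h ▸ mulVec_zero C⟩
  simpa [h] using hC.dotProduct_mulVec_pos hv

lemma PosDef.sub_vecMulVec_mulVec_eq_zero_iff (hC : C.PosDef) (hw : w ≠ 0)
    (hσ : σ = star w ⬝ᵥ C *ᵥ w) (ha : a = σ⁻¹ • C *ᵥ w) (v : n → 𝕜) :
    (σ⁻¹ • C - vecMulVec a (star a)) *ᵥ v = 0 ↔ ∃ c : 𝕜, v = c • w := by
  have hσ0 : σ ≠ 0 := (hσ ▸ hC.dotProduct_mulVec_pos hw).ne'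
  simp_rw [hC.isHermitian.sub_vecMulVec_mulVec hσ ha, smul_eq_zero_iff_right (inv_ne_zero hσ0),
    hC.mulVec_eq_zero_iff, sub_eq_zero]
  refine ⟨fun h => ⟨_, h⟩, ?_⟩
  rintro ⟨c, rfl⟩
  rw [mulVec_smul, dotProduct_smul, smul_eq_mul, ← hσ, mul_left_comm, inv_mul_cancel₀ hσ0, mul_one]

end Matrix

/-- The Hessian-type matrix `C/σ² − a aᴴ` is positive semidefinite of rank
`d − 1`, and its kernel is the span of `w`. -/
theorem hessian_rank_deficiency (d : ℕ) (C : Matrix (Fin d) (Fin d) ℂ)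
    (hC : C.PosDef) (w : Fin d → ℂ) (hw : w ≠ 0)
    (σ2 : ℂ) (hσ : σ2 = star w ⬝ᵥ C.mulVec w)
    (a : Fin d → ℂ) (ha : a = σ2⁻¹ • C.mulVec w) :
    (σ2⁻¹ • C - Matrix.vecMulVec a (star a)).PosSemidef ∧
    (σ2⁻¹ • C - Matrix.vecMulVec a (star a)).rank = d - 1 ∧
    (∀ v : Fin d → ℂ,
      (σ2⁻¹ • C - Matrix.vecMulVec a (star a)).mulVec v = 0 ↔
        ∃ c : ℂ, v = c • w) := by
  have hker := hC.sub_vecMulVec_mulVec_eq_zero_iff hw hσ ha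
  refine ⟨hC.posSemidef_sub_vecMulVec hw hσ ha, ?_, hker⟩
  simpa using rank_eq_card_sub_one_of_mulVec_eq_zero_iff hw hker
end

section
/- With H₁ = (c₃ a aᵀ)* and H₂ = (c₁ C + c₂ a aᴴ)ᵀ, where C is Hermitian positive definite, σ² = wᴴ C w, a = C w/σ², c₁ ≠ 0, c₂ = −σ² c₁ − c₃, and c₁ σ² + c₂ ≠ 0: H₁* H₂⁻¹ = −a wᵀ, and consequently H₂* − H₁* H₂⁻¹ H₁ = c₁* (C − σ² a aᴴ). -/
open Matrix
open scoped ComplexOrder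

namespace AppendixBAux

variable {d : ℕ}

lemma mul_vecMulVec (B : Matrix (Fin d) (Fin d) ℂ) (u v : Fin d → ℂ) :
    B * vecMulVec u v = vecMulVec (B.mulVec u) v := by
  ext i j
  simp only [Matrix.mul_apply, vecMulVec_apply, Matrix.mulVec, dotProduct, Finset.sum_mul]
  exact Finset.sum_congr rfl fun k _ => by ring

lemma vecMulVec_mul (u v : Fin d → ℂ) (B : Matrix (Fin d) (Fin d) ℂ) :
    vecMulVec u v * B = vecMulVec u (Matrix.vecMul v B) := by
  ext i j
  simp only [Matrix.mul_apply, vecMulVec_apply, Matrix.vecMul, dotProduct, Finset.mul_sum]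
  exact Finset.sum_congr rfl fun k _ => by ring

lemma vecMulVec_mulVec (u v x : Fin d → ℂ) :
    (vecMulVec u v).mulVec x = (v ⬝ᵥ x) • u := by
  ext i
  simp only [Matrix.mulVec, vecMulVec_apply, dotProduct, Pi.smul_apply, smul_eq_mul,
    Finset.sum_mul]
  exact Finset.sum_congr rfl fun k _ => by ring

lemma smul_vecMulVec (s : ℂ) (u v : Fin d → ℂ) :
    vecMulVec (s • u) v = s • vecMulVec u v := by
  ext i j; simp [vecMulVec_apply, mul_assoc]

lemma vecMulVec_mul_vecMulVec (u v x y : Fin d → ℂ) :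
    vecMulVec u v * vecMulVec x y = (v ⬝ᵥ x) • vecMulVec u y := by
  ext i j
  simp only [Matrix.mul_apply, vecMulVec_apply, dotProduct, Matrix.smul_apply,
    smul_eq_mul, Finset.sum_mul]
  exact Finset.sum_congr rfl fun k _ => by ring

lemma vecMulVec_smul (s : ℂ) (u v : Fin d → ℂ) :
    vecMulVec u (s • v) = s • vecMulVec u v := by
  ext i j; simp [vecMulVec_apply]; ring

end AppendixBAux

open AppendixBAux

/-- Appendix B computation: with `H₁ = (c₃ a aᵀ)*` and `H₂ = (c₁ C + c₂ a aᴴ)ᵀ`,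
`H₁* H₂⁻¹ = −a wᵀ` and `H₂* − H₁* H₂⁻¹ H₁ = c₁* (C − σ² a aᴴ)`. -/
theorem appendixB_schur (d : ℕ) (C : Matrix (Fin d) (Fin d) ℂ)
    (hC : C.PosDef) (w : Fin d → ℂ) (hw : w ≠ 0)
    (σ2 : ℂ) (hσ : σ2 = star w ⬝ᵥ C.mulVec w)
    (a : Fin d → ℂ) (ha : a = σ2⁻¹ • C.mulVec w)
    (c1 c2 c3 : ℂ) (hc1 : c1 ≠ 0)
    (hc2 : c2 = -σ2 * c1 - c3) (hden : c1 * σ2 + c2 ≠ 0)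
    (H1 H2 : Matrix (Fin d) (Fin d) ℂ)
    (hH1 : H1 = (c3 • Matrix.vecMulVec a a).map (starRingEnd ℂ))
    (hH2 : H2 = (c1 • C + c2 • Matrix.vecMulVec a (star a))ᵀ) :
    H1.map (starRingEnd ℂ) * H2⁻¹ = -(Matrix.vecMulVec a w) ∧
    H2.map (starRingEnd ℂ) - H1.map (starRingEnd ℂ) * H2⁻¹ * H1 =
      (starRingEnd ℂ c1) • (C - σ2 • Matrix.vecMulVec a (star a)) := by
  -- scalar facts
  have hpos : 0 < σ2 := hσ ▸ hC.dotProduct_mulVec_pos hw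
  have hσ0 : σ2 ≠ 0 := hpos.ne'
  have hσim : σ2.im = 0 := by
    rw [Complex.lt_def] at hpos
    simpa using hpos.2.symm
  have hσstar : starRingEnd ℂ σ2 = σ2 := Complex.conj_eq_iff_im.mpr hσim
  have hden' : σ2 * c1 + c2 ≠ 0 := by rwa [mul_comm σ2 c1]
  -- vector identities
  have hCw : C.mulVec w = σ2 • a := by
    rw [ha, smul_smul, mul_inv_cancel₀ hσ0, one_smul]
  have hwa : star w ⬝ᵥ a = 1 := by
    rw [ha, dotProduct_smul, ← hσ, smul_eq_mul, inv_mul_cancel₀ hσ0]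
  have haw : star a ⬝ᵥ w = 1 := by
    rw [star_dotProduct, hwa, star_one]
  have hwsa : w ⬝ᵥ star a = 1 := by rw [dotProduct_comm]; exact haw
  -- inverse of C
  have hCdet : IsUnit C.det := (Matrix.isUnit_iff_isUnit_det C).1 hC.isUnit
  have hCC : C * C⁻¹ = 1 := Matrix.mul_nonsing_inv _ hCdet
  have hCC' : C⁻¹ * C = 1 := Matrix.nonsing_inv_mul _ hCdet
  have hCia : C⁻¹.mulVec a = σ2⁻¹ • w := by
    rw [ha, Matrix.mulVec_smul, Matrix.mulVec_mulVec, hCC', Matrix.one_mulVec]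
  have hCinvH : (C⁻¹)ᴴ = C⁻¹ := hC.1.inv
  have hvCi : Matrix.vecMul (star a) C⁻¹ = σ2⁻¹ • star w := by
    rw [← hCinvH, ← Matrix.star_mulVec, hCia, star_smul]
    congr 1
    simp [hσstar]
  -- the explicit inverse
  set β : ℂ := c2 / (σ2 * (σ2 * c1 + c2)) with hβ
  set A : Matrix (Fin d) (Fin d) ℂ := vecMulVec a (star a) with hA
  set W : Matrix (Fin d) (Fin d) ℂ := vecMulVec w (star w) with hW
  set V : Matrix (Fin d) (Fin d) ℂ := vecMulVec a (star w) with hV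
  set M : Matrix (Fin d) (Fin d) ℂ := c1 • C + c2 • A with hM
  set Minv : Matrix (Fin d) (Fin d) ℂ := c1⁻¹ • (C⁻¹ - β • W) with hMinv
  have hCW : C * W = σ2 • V := by
    rw [hW, AppendixBAux.mul_vecMulVec, hCw, smul_vecMulVec]
  have hACi : A * C⁻¹ = σ2⁻¹ • V := by
    rw [hA, AppendixBAux.vecMulVec_mul, hvCi, vecMulVec_smul]
  have hAW : A * W = V := by
    rw [hA, hW, AppendixBAux.vecMulVec_mul_vecMulVec, haw, one_smul]
  have hMMinv : M * Minv = 1 := by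
    have expand : M * Minv = (c1⁻¹ * c1) • (1 : Matrix (Fin d) (Fin d) ℂ)
        + (c1⁻¹ * (c2 * σ2⁻¹ - β * (c1 * σ2) - β * c2)) • V := by
      rw [hM, hMinv]
      rw [Matrix.mul_smul, mul_sub, Matrix.mul_smul, add_mul, add_mul,
        Matrix.smul_mul, Matrix.smul_mul, Matrix.smul_mul, Matrix.smul_mul,
        hCC, hCW, hACi, hAW]
      match_scalars <;> ring
    rw [expand, inv_mul_cancel₀ hc1]
    have hcoef : c1⁻¹ * (c2 * σ2⁻¹ - β * (c1 * σ2) - β * c2) = 0 := by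
      rw [hβ]
      field_simp
      ring
    rw [hcoef, one_smul, zero_smul, add_zero]
  have hMinvM : Minv * M = 1 := mul_eq_one_comm.mp hMMinv
  have hH2inv : H2⁻¹ = Minvᵀ := by
    apply Matrix.inv_eq_right_inv
    rw [hH2, ← Matrix.transpose_mul, hM, hMinvM, Matrix.transpose_one]
  -- Minv applied to a
  have hMva : Minv.mulVec a = (c1⁻¹ * (σ2⁻¹ - β)) • w := by
    rw [hMinv, Matrix.smul_mulVec, Matrix.sub_mulVec, hCia,
      Matrix.smul_mulVec, hW, vecMulVec_mulVec, hwa, one_smul]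
    module
  have hH1s : H1.map (starRingEnd ℂ) = c3 • vecMulVec a a := by
    rw [hH1]
    ext i j
    simp [Matrix.map_apply]
  have part1 : H1.map (starRingEnd ℂ) * H2⁻¹ = -(Matrix.vecMulVec a w) := by
    rw [hH1s, hH2inv, Matrix.smul_mul, AppendixBAux.vecMulVec_mul, Matrix.vecMul_transpose,
      hMva, vecMulVec_smul, smul_smul]
    have : c3 * (c1⁻¹ * (σ2⁻¹ - β)) = -1 := by
      have hc3 : c3 = -σ2 * c1 - c2 := by rw [hc2]; ring
      rw [hβ, hc3]
      field_simp
      ring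
    rw [this, neg_one_smul]
  refine ⟨part1, ?_⟩
  have hH1' : H1 = starRingEnd ℂ c3 • vecMulVec (star a) (star a) := by
    rw [hH1]
    ext i j
    simp [Matrix.map_apply, vecMulVec_apply, mul_comm]
  have hH2star : H2.map (starRingEnd ℂ)
      = starRingEnd ℂ c1 • C + starRingEnd ℂ c2 • A := by
    have hAH : Aᴴ = A := by
      rw [hA]
      ext i j
      simp [Matrix.conjTranspose_apply, vecMulVec_apply, mul_comm]
    have hmapCT : H2.map (starRingEnd ℂ) = Mᴴ := by rw [hH2]; rfl
    rw [hmapCT, hM, Matrix.conjTranspose_add, Matrix.conjTranspose_smul,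
      Matrix.conjTranspose_smul, hC.1, hAH]
    rfl
  have hprod : H1.map (starRingEnd ℂ) * H2⁻¹ * H1
      = -(starRingEnd ℂ c3) • A := by
    rw [part1, hH1', Matrix.mul_smul, Matrix.neg_mul,
      AppendixBAux.vecMulVec_mul_vecMulVec, hwsa, one_smul, ← hA]
    module
  have hsum : starRingEnd ℂ c2 + starRingEnd ℂ c3 = -(starRingEnd ℂ c1 * σ2) := by
    have h : c2 + c3 = -(c1 * σ2) := by rw [hc2]; ring
    rw [← map_add, h, map_neg, _root_.map_mul, hσstar]
  rw [hprod, hH2star]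
  match_scalars
  · ring
  · linear_combination hsum
end
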